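/- Assume C is Z-semi-prenormal. Let T be a Z-normal-mono-coreflective full replete subcategory of C (the inclusion T ↪ C admits a right adjoint whose counit components are Z-normal monomorphisms). Then the following are equivalent: (i) T is a Z-torsion subcategory of C (there exists F such that (T, F) is a Z-torsion theory on C); (ii) T is closed under Z-extensions. -/
import Mathlib


open CategoryTheory

universe v u

variable {C : Type u} [Category.{v} C]

/-- A morphism is `Z`-trivial if it factors through an object of `Z`. -/
def IsZTrivial (Z : Set C) {A B : C} (f : A ⟶ B) : Prop :=
  ∃ (M : C) (g : A ⟶ M) (h : M ⟶ B), M ∈ Z ∧ g ≫ h = f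

/-- `k : K ⟶ A` is a `Z`-kernel of `f : A ⟶ B`. -/
def IsZKernel (Z : Set C) {K A B : C} (k : K ⟶ A) (f : A ⟶ B) : Prop :=
  IsZTrivial Z (k ≫ f) ∧
    ∀ (X : C) (x : X ⟶ A), IsZTrivial Z (x ≫ f) → ∃! x' : X ⟶ K, x' ≫ k = x

/-- `q : B ⟶ Q` is a `Z`-cokernel of `f : A ⟶ B`. -/
def IsZCokernel (Z : Set C) {A B Q : C} (f : A ⟶ B) (q : B ⟶ Q) : Prop :=
  IsZTrivial Z (f ≫ q) ∧
    ∀ (X : C) (x : B ⟶ X), IsZTrivial Z (f ≫ x) → ∃! x' : Q ⟶ X, q ≫ x' = x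

/-- A `Z`-normal monomorphism: a morphism occurring as a `Z`-kernel. -/
def IsZNormalMono (Z : Set C) {K A : C} (k : K ⟶ A) : Prop :=
  ∃ (B : C) (f : A ⟶ B), IsZKernel Z k f

/-- A `Z`-normal epimorphism: a morphism occurring as a `Z`-cokernel. -/
def IsZNormalEpi (Z : Set C) {B Q : C} (q : B ⟶ Q) : Prop :=
  ∃ (A : C) (f : A ⟶ B), IsZCokernel Z f q

/-- A `Z`-exact sequence: the first morphism is a `Z`-kernel of the second,
and the second is a `Z`-cokernel of the first. -/
def IsZExact (Z : Set C) {A X B : C} (a : A ⟶ X) (b : X ⟶ B) : Prop :=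
  IsZKernel Z a b ∧ IsZCokernel Z a b

/-- A class of objects is replete if it is closed under isomorphism. -/
def SetReplete (S : Set C) : Prop :=
  ∀ ⦃X Y : C⦄, X ∈ S → (X ≅ Y) → Y ∈ S

/-- `(T, F)` is a `Z`-torsion theory: every morphism from `T` to `F` is `Z`-trivial,
and every object has a `(T,F)`-presentation. -/
def IsZTorsionTheory (Z T F : Set C) : Prop :=
  (∀ ⦃A B : C⦄, A ∈ T → B ∈ F → ∀ f : A ⟶ B, IsZTrivial Z f) ∧
  (∀ X : C, ∃ (A B : C) (a : A ⟶ X) (b : X ⟶ B), A ∈ T ∧ B ∈ F ∧ IsZExact Z a b)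

/-- A morphism has `Z`-trivial `Z`-kernel if its `Z`-kernel exists and its domain lies in `Z`. -/
def HasZTrivialZKernel (Z : Set C) {X Y : C} (f : X ⟶ Y) : Prop :=
  ∃ (K : C) (k : K ⟶ X), IsZKernel Z k f ∧ K ∈ Z

/-- A class of objects is closed under `Z`-extensions. -/
def ClosedUnderZExtensions (Z S : Set C) : Prop :=
  ∀ ⦃A X B : C⦄ (a : A ⟶ X) (b : X ⟶ B), IsZExact Z a b → A ∈ S → B ∈ S → X ∈ S

/-- `C` is `Z`-semi-prenormal: `Z` is mono-coreflective, `C` admits pullbacks along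
`Z`-normal monomorphisms and `Z`-cokernels of `Z`-kernels, and the pullback of a
`Z`-normal epimorphism along a `Z`-normal monomorphism is a `Z`-normal epimorphism. -/
structure IsZSemiPrenormal (Z : Set C) : Prop where
  monoCoreflective : ∀ B : C, ∃ (ZB : C) (ε : ZB ⟶ B), ZB ∈ Z ∧ Mono ε ∧
    ∀ (W : C), W ∈ Z → ∀ g : W ⟶ B, ∃! g' : W ⟶ ZB, g' ≫ ε = g
  hasPullbacksAlongNormalMonos : ∀ {A M B : C} (g : A ⟶ B) (m : M ⟶ B),
    IsZNormalMono Z m → ∃ (P : C) (p : P ⟶ A) (q : P ⟶ M), IsPullback p q g m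
  hasCokernelsOfKernels : ∀ {K A : C} (k : K ⟶ A), IsZNormalMono Z k →
    ∃ (Q : C) (q : A ⟶ Q), IsZCokernel Z k q
  pullbackStability : ∀ {P M A B : C} (p : P ⟶ M) (q : P ⟶ A) (m : M ⟶ B) (f : A ⟶ B),
    IsPullback p q m f → IsZNormalEpi Z f → IsZNormalMono Z m → IsZNormalEpi Z p

/-- `C` is `Z`-prenormal: `Z`-semi-prenormal, finitely complete, and `Z`-normal
epimorphisms are stable under pullback along arbitrary morphisms. -/
structure IsZPrenormal (Z : Set C) extends IsZSemiPrenormal Z : Prop where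
  finitelyComplete : Limits.HasFiniteLimits C
  normalEpiStable : ∀ {P A B B' : C} (p : P ⟶ B') (q : P ⟶ A) (b : B' ⟶ B) (f : A ⟶ B),
    IsPullback p q b f → IsZNormalEpi Z f → IsZNormalEpi Z p

lemma IsZTrivial.comp_left {Z : Set C} {A B D : C} {f : A ⟶ B} (hf : IsZTrivial Z f)
    (g : B ⟶ D) : IsZTrivial Z (f ≫ g) := by
  obtain ⟨M, u, v, hM, huv⟩ := hf
  exact ⟨M, u, v ≫ g, hM, by rw [← Category.assoc, huv]⟩

lemma IsZTrivial.comp_right {Z : Set C} {A B D : C} (f : A ⟶ B) {g : B ⟶ D}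
    (hg : IsZTrivial Z g) : IsZTrivial Z (f ≫ g) := by
  obtain ⟨M, u, v, hM, huv⟩ := hg
  exact ⟨M, f ≫ u, v, hM, by rw [Category.assoc, huv]⟩

lemma isZTrivial_of_cod_mem {Z : Set C} {A B : C} (f : A ⟶ B) (h : B ∈ Z) : IsZTrivial Z f :=
  ⟨B, f, 𝟙 B, h, Category.comp_id f⟩

lemma isZTrivial_of_dom_mem {Z : Set C} {A B : C} (f : A ⟶ B) (h : A ∈ Z) : IsZTrivial Z f :=
  ⟨A, 𝟙 A, f, h, Category.id_comp f⟩

lemma IsZKernel.mono' {Z : Set C} {K A B : C} {k : K ⟶ A} {f : A ⟶ B}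
    (h : IsZKernel Z k f) : Mono k := by
  constructor
  intro W a b hab
  have triv : IsZTrivial Z ((a ≫ k) ≫ f) := by
    rw [Category.assoc]; exact IsZTrivial.comp_right a h.1
  obtain ⟨u, _, huniq⟩ := h.2 W (a ≫ k) triv
  exact (huniq a rfl).trans (huniq b hab.symm).symm

lemma IsZNormalMono.mono' {Z : Set C} {K A : C} {k : K ⟶ A}
    (h : IsZNormalMono Z k) : Mono k := by
  obtain ⟨B, f, hf⟩ := h; exact hf.mono'

lemma IsZCokernel.epi' {Z : Set C} {A B Q : C} {f : A ⟶ B} {q : B ⟶ Q}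
    (h : IsZCokernel Z f q) : Epi q := by
  constructor
  intro W a b hab
  have triv : IsZTrivial Z (f ≫ q ≫ a) := by
    rw [← Category.assoc]; exact IsZTrivial.comp_left h.1 a
  obtain ⟨u, _, huniq⟩ := h.2 W (q ≫ a) triv
  exact (huniq a rfl).trans (huniq b hab.symm).symm

lemma isZKernel_of_isZCokernel {Z : Set C} {K A B Q : C} {k : K ⟶ A} {f : A ⟶ B} {q : A ⟶ Q}
    (hk : IsZKernel Z k f) (hq : IsZCokernel Z k q) : IsZKernel Z k q := by
  refine ⟨hq.1, fun X x hx => ?_⟩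
  obtain ⟨f', hf', _⟩ := hq.2 B f hk.1
  refine hk.2 X x ?_
  rw [← hf', ← Category.assoc]
  exact IsZTrivial.comp_left hx f'

/-- If `q` is a `Z`-cokernel of `f` and `f` factors through `k` with `k ≫ q` `Z`-trivial,
then `q` is a `Z`-cokernel of `k`. -/
lemma isZCokernel_of_factor {Z : Set C} {K A B Q : C} {k : K ⟶ A} {f : B ⟶ A} {q : A ⟶ Q}
    {f₀ : B ⟶ K} (hq : IsZCokernel Z f q) (hfac : f₀ ≫ k = f)
    (htriv : IsZTrivial Z (k ≫ q)) : IsZCokernel Z k q := by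
  refine ⟨htriv, fun X x hx => ?_⟩
  refine hq.2 X x ?_
  rw [← hfac, Category.assoc]
  exact IsZTrivial.comp_right f₀ hx

/-- in a `Z`-semi-prenormal category, a `Z`-normal-mono-coreflective
subcategory `T` is a `Z`-torsion subcategory iff it is closed under `Z`-extensions. -/
theorem torsion_iff_closed_under_extensions (Z T : Set C)
    (hZrep : SetReplete Z) (hTrep : SetReplete T)
    (hspn : IsZSemiPrenormal Z)
    (S : C → C) (ε : ∀ X : C, S X ⟶ X)
    (hST : ∀ X : C, S X ∈ T)
    (hcor : ∀ (X W : C), W ∈ T → ∀ g : W ⟶ X, ∃! g' : W ⟶ S X, g' ≫ ε X = g)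
    (hmono : ∀ X : C, IsZNormalMono Z (ε X)) :
    (∃ F : Set C, SetReplete F ∧ IsZTorsionTheory Z T F) ↔
      ClosedUnderZExtensions Z T := by
  -- `Z ⊆ T`
  have hZT : ∀ W : C, W ∈ Z → W ∈ T := by
    intro W hW
    obtain ⟨B, f, hf⟩ := hmono W
    have htriv : IsZTrivial Z (𝟙 W ≫ f) := isZTrivial_of_dom_mem _ hW
    obtain ⟨u, hu, _⟩ := hf.2 W (𝟙 W) htriv
    have hmonoW : Mono (ε W) := hf.mono'
    have hiso : (ε W) ≫ u = 𝟙 (S W) := by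
      have : ((ε W) ≫ u) ≫ (ε W) = 𝟙 (S W) ≫ (ε W) := by
        rw [Category.assoc, hu, Category.comp_id, Category.id_comp]
      exact (cancel_mono (ε W)).mp this
    exact hTrep (hST W) ⟨ε W, u, hiso, hu⟩
  constructor
  · -- torsion theory → closed under extensions
    rintro ⟨F, _, htors, hpres⟩ A X B a b ⟨hker, hcok⟩ hA hB
    obtain ⟨A₀, B₀, t, f, hA₀, hB₀, ht, hf⟩ := hpres X
    -- `f : X ⟶ B₀` is `Z`-trivial
    have haf : IsZTrivial Z (a ≫ f) := htors hA hB₀ _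
    obtain ⟨f', hf', _⟩ := hcok.2 B₀ f haf
    have hftriv : IsZTrivial Z f := by
      rw [← hf']
      exact IsZTrivial.comp_right b (htors hB hB₀ f')
    -- hence `𝟙 X` factors through `t`, so `t` is split epi, and it is mono
    obtain ⟨u, hu, _⟩ := ht.2 X (𝟙 X) (by rwa [Category.id_comp])
    have hmonot : Mono t := ht.mono'
    have hiso : t ≫ u = 𝟙 A₀ := by
      have : (t ≫ u) ≫ t = 𝟙 A₀ ≫ t := by
        rw [Category.assoc, hu, Category.comp_id, Category.id_comp]
      exact (cancel_mono t).mp this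
    exact hTrep hA₀ ⟨t, u, hiso, hu⟩
  · -- closed under extensions → torsion theory
    intro hclosed
    refine ⟨{B | ∀ A : C, A ∈ T → ∀ f : A ⟶ B, IsZTrivial Z f}, ?_, ?_, ?_⟩
    · intro B B' hB e f' hf' g
      have := hB f' hf' (g ≫ e.inv)
      have h2 : IsZTrivial Z ((g ≫ e.inv) ≫ e.hom) := IsZTrivial.comp_left this e.hom
      rwa [Category.assoc, e.inv_hom_id, Category.comp_id] at h2
    · intro A B hA hB f
      exact hB A hA f
    · intro X
      -- cokernel of ε X
      obtain ⟨BX, fX, hkerX⟩ := hmono X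
      obtain ⟨Q, q, hq⟩ := hspn.hasCokernelsOfKernels (ε X) ⟨BX, fX, hkerX⟩
      have hεker : IsZKernel Z (ε X) q := isZKernel_of_isZCokernel hkerX hq
      refine ⟨S X, Q, ε X, q, hST X, ?_, hεker, hq⟩
      -- show `Q ∈ F`: enough to show `ε Q` is `Z`-trivial
      have hεQmono : Mono (ε Q) := (hmono Q).mono'
      -- pullback of `q` along `ε Q`
      obtain ⟨P, p, r, hpb⟩ := hspn.hasPullbacksAlongNormalMonos q (ε Q) (hmono Q)
      have hqepi : IsZNormalEpi Z q := ⟨S X, ε X, hq⟩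
      have hrepi : IsZNormalEpi Z r :=
        hspn.pullbackStability r p (ε Q) q hpb.flip hqepi (hmono Q)
      obtain ⟨A', f, hf⟩ := hrepi
      -- lift `ε X` to `k : S X ⟶ P`
      obtain ⟨s, hs, _⟩ := hcor Q (S X) (hST X) (ε X ≫ q)
      have hcomm : ε X ≫ q = s ≫ ε Q := hs.symm
      let k : S X ⟶ P := hpb.lift (ε X) s hcomm
      have hkp : k ≫ p = ε X := hpb.lift_fst _ _ _
      have hkr : k ≫ r = s := hpb.lift_snd _ _ _
      -- `s` is `Z`-trivial
      have hstriv : IsZTrivial Z s := by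
        obtain ⟨M, u, v, hM, huv⟩ := hq.1
        obtain ⟨v', hv', _⟩ := hcor Q M (hZT M hM) v
        refine ⟨M, u, v', hM, ?_⟩
        have : (u ≫ v') ≫ ε Q = s ≫ ε Q := by
          rw [Category.assoc, hv', huv, hcomm]
        exact (cancel_mono (ε Q)).mp this
      -- `k` is a `Z`-kernel of `r`
      have hkker : IsZKernel Z k r := by
        refine ⟨by rwa [hkr], fun X' x hx => ?_⟩
        have hxpq : IsZTrivial Z ((x ≫ p) ≫ q) := by
          rw [Category.assoc, hpb.w, ← Category.assoc]
          exact IsZTrivial.comp_left hx (ε Q)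
        obtain ⟨y, hy, hyuniq⟩ := hεker.2 X' (x ≫ p) hxpq
        refine ⟨y, ?_, ?_⟩
        · apply hpb.hom_ext
          · rw [Category.assoc, hkp, hy]
          · rw [Category.assoc, hkr]
            refine (cancel_mono (ε Q)).mp ?_
            rw [Category.assoc, ← hcomm, ← Category.assoc, hy, Category.assoc,
              hpb.w, Category.assoc]
        · intro x' hx'
          refine hyuniq x' ?_
          rw [← hx', Category.assoc, hkp]
      -- `r` is a `Z`-cokernel of `k`
      have hrcok : IsZCokernel Z k r := by
        obtain ⟨f₀, hf₀, _⟩ := hkker.2 A' f hf.1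
        exact isZCokernel_of_factor hf hf₀ (by rwa [hkr])
      -- hence `P ∈ T`
      have hP : P ∈ T := hclosed k r ⟨hkker, hrcok⟩ (hST X) (hST Q)
      -- `r ≫ ε Q` is `Z`-trivial
      have hrtriv : IsZTrivial Z (r ≫ ε Q) := by
        obtain ⟨p', hp', _⟩ := hcor X P hP p
        rw [← hpb.w, ← hp', Category.assoc]
        exact IsZTrivial.comp_right p' hq.1
      -- descend the factorization through `r` to get `ε Q` trivial
      have hεQtriv : IsZTrivial Z (ε Q) := by
        obtain ⟨M, u, v, hM, huv⟩ := hrtriv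
        have hfu : IsZTrivial Z (f ≫ u) := isZTrivial_of_cod_mem _ hM
        obtain ⟨u', hu', _⟩ := hf.2 M u hfu
        refine ⟨M, u', v, hM, ?_⟩
        have hre : Epi r := hf.epi'
        refine (cancel_epi r).mp ?_
        rw [← Category.assoc, hu', huv]
      intro A hA h
      obtain ⟨h', hh', _⟩ := hcor Q A hA h
      rw [← hh']
      exact IsZTrivial.comp_right h' hεQtriv
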